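/- Let {μ_n} and μ be Borel probability measures with compact supports on ℝ^s, and suppose μ_n converges weakly to μ. If the integral periodic zero set Z(μ) = {ξ ∈ [0,1)^s : μ̂(ξ+k) = 0 for all k ∈ ℤ^s} is empty, then there exists a subsequence {μ_{n_k}} which is an equi-positive family: there is ε₀ > 0 such that for every x ∈ [0,1)^s and every k there exists m ∈ ℤ^s with |μ̂_{n_k}(x+m)| > ε₀. -/

import Mathlib

open MeasureTheory Filter Topology Set

noncomputable section

/-- Fourier transform `μ̂(ξ) = ∫ e^{2πi⟨x,ξ⟩} dμ(x)` of a Borel measure on `ℝ^s`. -/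
def ftE {s : ℕ} (μ : Measure (EuclideanSpace ℝ (Fin s)))
    (ξ : EuclideanSpace ℝ (Fin s)) : ℂ :=
  ∫ x, Complex.exp (2 * Real.pi * Complex.I * ((inner ℝ x ξ : ℝ) : ℂ)) ∂μ

/-- The lattice point `k ∈ ℤ^s` viewed as a vector of `ℝ^s`. -/
def intVec {s : ℕ} (k : Fin s → ℤ) : EuclideanSpace ℝ (Fin s) := WithLp.toLp 2 (fun i => (k i : ℝ))

/-- The integral periodic zero set
`Z(μ) = {ξ ∈ [0,1)^s : μ̂(ξ+k) = 0 for all k ∈ ℤ^s}`. -/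
def ZE {s : ℕ} (μ : Measure (EuclideanSpace ℝ (Fin s))) :
    Set (EuclideanSpace ℝ (Fin s)) :=
  {ξ | (∀ i, ξ i ∈ Set.Ico (0 : ℝ) 1) ∧ ∀ k : Fin s → ℤ, ftE μ (ξ + intVec k) = 0}

/-- The cube `[0,1]^s`. -/
def cubeIcc (s : ℕ) : Set (EuclideanSpace ℝ (Fin s)) :=
  {x | ∀ i, x i ∈ Set.Icc (0 : ℝ) 1}

/-- The cube `[0,1)^s`. -/
def cubeIco (s : ℕ) : Set (EuclideanSpace ℝ (Fin s)) :=
  {x | ∀ i, x i ∈ Set.Ico (0 : ℝ) 1}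

/-- Weak convergence of measures on `ℝ^s` (tested against continuous functions with
compact support). -/
def WeakConvE {s : ℕ} (μn : ℕ → Measure (EuclideanSpace ℝ (Fin s)))
    (μ : Measure (EuclideanSpace ℝ (Fin s))) : Prop :=
  ∀ f : C(EuclideanSpace ℝ (Fin s), ℝ), HasCompactSupport f →
    Tendsto (fun n => ∫ x, f x ∂(μn n)) atTop (nhds (∫ x, f x ∂μ))

end

/-!
A cutoff `g ∈ C_c` equal to `1` on the support of `μ` turns weak convergence into uniform
convergence of Fourier transforms on compact sets: the damped transforms `∫ g(x) e^{i⟨x,t⟩} dμₙ`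
are equi-Lipschitz (the weight has bounded support) and converge pointwise to `μ̂`, hence converge
uniformly on compacts, while they differ from `μ̂ₙ` by at most `1 - ∫ g dμₙ → 0`.
Since `Z(μ) = ∅`, compactness of `[0,1]^s` yields finitely many shifts `T ⊆ ℤ^s` and `ε > 0` such
that every `ξ` in the cube has some `m ∈ T` with `|μ̂(ξ + m)| > ε`. Uniform convergence on the
finitely many shifted cubes then makes every tail of `(μₙ)` equi-positive with constant `ε / 2`.
-/

open Complex
open scoped RealInnerProductSpace NNReal

theorem EquicontinuousOn.tendstoUniformlyOn_of_tendsto {ι X α : Type*} [TopologicalSpace X]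
    [UniformSpace α] {F : ι → X → α} {f : X → α} {l : Filter ι} {C : Set X}
    (hF : EquicontinuousOn F C) (hC : IsCompact C)
    (h : ∀ x ∈ C, Tendsto (F · x) l (𝓝 (f x))) : TendstoUniformlyOn F f l C := by
  have key := EquicontinuousOn.tendsto_uniformOnFun_iff_pi' (𝔖 := {C}) (by simpa using hC)
    (by simpa using hF) l f
  rw [UniformOnFun.tendsto_iff_tendstoUniformlyOn, sUnion_singleton, tendsto_pi_nhds] at key
  exact key.2 (fun x => h x x.2) C rfl

theorem IsCompact.exists_pos_finset_lt {ι X : Type*} [TopologicalSpace X] {C : Set X}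
    (hC : IsCompact C) {F : ι → X → ℝ} (hF : ∀ i, Continuous (F i))
    (h : ∀ x ∈ C, ∃ i, 0 < F i x) : ∃ ε > 0, ∃ T : Finset ι, ∀ x ∈ C, ∃ i ∈ T, ε < F i x := by
  classical
  -- Covering by the sets `{1 / (n + 1) < F i}` makes the bound uniform on a finite subcover.
  obtain ⟨T, hT⟩ := hC.elim_finite_subcover (fun p : ι × ℕ => {x | 1 / ((p.2 : ℝ) + 1) < F p.1 x})
    (fun p => isOpen_lt continuous_const (hF p.1)) fun x hx => by
      obtain ⟨i, hi⟩ := h x hx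
      obtain ⟨n, hn⟩ := exists_nat_one_div_lt hi
      exact mem_iUnion.2 ⟨(i, n), hn⟩
  refine ⟨1 / ((T.sup Prod.snd : ℕ) + 1), by positivity, T.image Prod.fst, fun x hx => ?_⟩
  obtain ⟨p, hpT, hp⟩ := mem_iUnion₂.1 (hT hx)
  refine ⟨p.1, Finset.mem_image_of_mem _ hpT, lt_of_le_of_lt ?_ hp⟩
  gcongr
  exact_mod_cast Finset.le_sup (f := Prod.snd) hpT

theorem tendsto_integral_complex_of_tendsto_integral {X ι : Type*} [TopologicalSpace X]
    [MeasurableSpace X] [OpensMeasurableSpace X] {l : Filter ι} {μn : ι → Measure X}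
    {μ : Measure X} [∀ n, IsFiniteMeasure (μn n)] [IsFiniteMeasure μ]
    (hw : ∀ f : C(X, ℝ), HasCompactSupport f →
      Tendsto (fun n => ∫ x, f x ∂μn n) l (𝓝 (∫ x, f x ∂μ)))
    (f : C(X, ℂ)) (hf : HasCompactSupport f) :
    Tendsto (fun n => ∫ x, f x ∂μn n) l (𝓝 (∫ x, f x ∂μ)) := by
  have hre := hw ⟨fun x => (f x).re, by fun_prop⟩ (hf.comp_left zero_re)
  have him := hw ⟨fun x => (f x).im, by fun_prop⟩ (hf.comp_left zero_im)
  have hint (ν : Measure X) [IsFiniteMeasure ν] : Integrable f ν :=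
    f.continuous.integrable_of_hasCompactSupport hf
  simp_rw [← integral_re_add_im (hint _)]
  exact ((continuous_ofReal.tendsto _).comp hre).add
    (((continuous_ofReal.tendsto _).comp him).mul_const _)

section CharFun

variable {E : Type*} [NormedAddCommGroup E] [InnerProductSpace ℝ E]

theorem norm_exp_inner_mul_I_sub_le (x t u : E) :
    ‖exp (⟪x, t⟫ * I) - exp (⟪x, u⟫ * I)‖ ≤ ‖x‖ * ‖t - u‖ := by
  have h : exp (⟪x, t⟫ * I) - exp (⟪x, u⟫ * I)
      = exp (⟪x, u⟫ * I) * (exp (I * ⟪x, t - u⟫) - 1) := by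
    rw [mul_sub, mul_one, ← exp_add, inner_sub_right]
    push_cast
    ring_nf
  rw [h, norm_mul, norm_exp_ofReal_mul_I, one_mul]
  exact Real.norm_exp_I_mul_ofReal_sub_one_le.trans <| by
    simpa using abs_real_inner_le_norm x (t - u)

variable [MeasurableSpace E] {ν : Measure E} {g : C(E, ℝ)}

noncomputable def weightedCharFun (g : E → ℝ) (ν : Measure E) (t : E) : ℂ :=
  ∫ x, g x * exp (⟪x, t⟫ * I) ∂ν

theorem weightedCharFun_eq_charFun (hg : ∀ᵐ x ∂ν, g x = 1) :
    weightedCharFun g ν = charFun ν := by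
  ext t
  refine integral_congr_ae ?_
  filter_upwards [hg] with x hx
  simp [hx]

variable [BorelSpace E]

theorem integrable_weighted_exp [IsFiniteMeasure ν] (hg : ∀ x, g x ∈ Icc (0 : ℝ) 1) (t : E) :
    Integrable (fun x => (g x : ℂ) * exp (⟪x, t⟫ * I)) ν := by
  refine Integrable.mono' (integrable_const 1) (by fun_prop) (ae_of_all _ fun x => ?_)
  rw [norm_mul, norm_exp_ofReal_mul_I, mul_one, norm_real, Real.norm_of_nonneg (hg x).1]
  exact (hg x).2

theorem norm_charFun_sub_weightedCharFun_le [IsFiniteMeasure ν]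
    (hg : ∀ x, g x ∈ Icc (0 : ℝ) 1) (t : E) :
    ‖charFun ν t - weightedCharFun g ν t‖ ≤ ∫ x, 1 - g x ∂ν := by
  have hint_g : Integrable g ν := (integrable_const 1).mono' (by fun_prop)
    (ae_of_all _ fun x => by simpa [abs_of_nonneg (hg x).1] using (hg x).2)
  rw [charFun_apply, weightedCharFun, ← integral_sub ((integrable_const 1).mono' (by fun_prop)
    (ae_of_all _ fun x => by simp)) (integrable_weighted_exp hg t)]
  refine norm_integral_le_of_norm_le ((integrable_const 1).sub hint_g) (ae_of_all _ fun x => ?_)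
  rw [← one_sub_mul, norm_mul, norm_exp_ofReal_mul_I, mul_one, ← ofReal_one, ← ofReal_sub,
    norm_real, Real.norm_of_nonneg (sub_nonneg.2 (hg x).2)]

theorem lipschitzWith_weightedCharFun [IsProbabilityMeasure ν] {R : ℝ≥0}
    (hg : ∀ x, g x ∈ Icc (0 : ℝ) 1) (hR : Function.support g ⊆ Metric.closedBall 0 R) :
    LipschitzWith R (weightedCharFun g ν) := by
  refine LipschitzWith.of_dist_le_mul fun t u => ?_
  rw [dist_eq_norm, dist_eq_norm, weightedCharFun, weightedCharFun,
    ← integral_sub (integrable_weighted_exp hg t) (integrable_weighted_exp hg u)]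
  refine (norm_integral_le_of_norm_le (integrable_const ((R : ℝ) * ‖t - u‖))
    (ae_of_all _ fun x => ?_)).trans (by simp)
  rw [← mul_sub, norm_mul, norm_real, Real.norm_of_nonneg (hg x).1]
  by_cases hx : g x = 0
  · rw [hx, zero_mul]
    positivity
  · have hxR : ‖x‖ ≤ R := by simpa using hR hx
    calc g x * ‖exp (⟪x, t⟫ * I) - exp (⟪x, u⟫ * I)‖ ≤ 1 * (‖x‖ * ‖t - u‖) :=
          mul_le_mul (hg x).2 (norm_exp_inner_mul_I_sub_le x t u) (norm_nonneg _) zero_le_one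
      _ ≤ R * ‖t - u‖ := by
          rw [one_mul]
          gcongr

variable {ι : Type*} {l : Filter ι} {μn : ι → Measure E} {μ : Measure E}

theorem tendsto_weightedCharFun [∀ n, IsFiniteMeasure (μn n)] [IsFiniteMeasure μ]
    (hw : ∀ f : C(E, ℝ), HasCompactSupport f →
      Tendsto (fun n => ∫ x, f x ∂μn n) l (𝓝 (∫ x, f x ∂μ)))
    (hgc : HasCompactSupport g) (t : E) :
    Tendsto (fun n => weightedCharFun g (μn n) t) l (𝓝 (weightedCharFun g μ t)) :=
  tendsto_integral_complex_of_tendsto_integral hw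
    ⟨fun x => g x * exp (⟪x, t⟫ * I), by fun_prop⟩ ((hgc.comp_left ofReal_zero).mul_right)

theorem tendstoUniformlyOn_charFun_of_tendsto_integral [FiniteDimensional ℝ E]
    [∀ n, IsProbabilityMeasure (μn n)] [IsProbabilityMeasure μ]
    (hw : ∀ f : C(E, ℝ), HasCompactSupport f →
      Tendsto (fun n => ∫ x, f x ∂μn n) l (𝓝 (∫ x, f x ∂μ)))
    {K : Set E} (hK : IsCompact K) (hμK : μ Kᶜ = 0) {C : Set E} (hC : IsCompact C) :
    TendstoUniformlyOn (fun n => charFun (μn n)) (charFun μ) l C := by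
  obtain ⟨g, hgK, -, hgc, hg⟩ := exists_continuous_one_zero_of_isCompact hK isClosed_empty
    (disjoint_empty K)
  obtain ⟨R, hR⟩ := hgc.isCompact.isBounded.subset_closedBall 0
  have hgμ : ∀ᵐ x ∂μ, g x = 1 :=
    (measure_eq_zero_iff_ae_notMem.1 hμK).mono fun x hx => hgK (not_not.1 hx)
  have hweighted : TendstoUniformlyOn (fun n => weightedCharFun g (μn n)) (charFun μ) l C := by
    rw [← weightedCharFun_eq_charFun hgμ]
    refine EquicontinuousOn.tendstoUniformlyOn_of_tendsto ?_ hC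
      fun t _ => tendsto_weightedCharFun hw hgc t
    refine (LipschitzWith.uniformEquicontinuous _ R.toNNReal fun n =>
      lipschitzWith_weightedCharFun hg ?_).equicontinuous.equicontinuousOn C
    exact (subset_tsupport g).trans (hR.trans (Metric.closedBall_subset_closedBall
      (Real.le_coe_toNNReal R)))
  have htail : Tendsto (fun n => ∫ x, 1 - g x ∂μn n) l (𝓝 0) := by
    have hint (ν : Measure E) [IsFiniteMeasure ν] : Integrable g ν :=
      g.continuous.integrable_of_hasCompactSupport hgc
    have hgμ' : ∫ x, g x ∂μ = 1 := by simp [integral_congr_ae hgμ]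
    simpa [integral_sub, hint, hgμ'] using (hw g hgc).const_sub 1
  rw [Metric.tendstoUniformlyOn_iff] at hweighted ⊢
  intro ε hε
  filter_upwards [hweighted (ε / 2) (half_pos hε), htail.eventually (gt_mem_nhds (half_pos hε))]
    with n hn hn' t ht
  calc dist (charFun μ t) (charFun (μn n) t)
      ≤ dist (charFun μ t) (weightedCharFun g (μn n) t)
        + ‖charFun (μn n) t - weightedCharFun g (μn n) t‖ := by
        rw [← dist_eq_norm, dist_comm (charFun (μn n) t)]
        exact dist_triangle _ _ _
    _ < ε / 2 + ε / 2 := add_lt_add_of_lt_of_le (hn t ht)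
        ((norm_charFun_sub_weightedCharFun_le hg t).trans hn'.le)
    _ = ε := add_halves ε

end CharFun

section EuclideanSpace

variable {s : ℕ}

theorem ftE_eq_charFun (μ : Measure (EuclideanSpace ℝ (Fin s))) (ξ : EuclideanSpace ℝ (Fin s)) :
    ftE μ ξ = charFun μ ((2 * Real.pi) • ξ) := by
  rw [ftE, charFun_apply]
  congr 1 with x
  rw [real_inner_smul_right]
  push_cast
  ring_nf

theorem continuous_ftE (μ : Measure (EuclideanSpace ℝ (Fin s))) [IsFiniteMeasure μ] :
    Continuous (ftE μ) := by
  rw [show ftE μ = fun ξ => charFun μ ((2 * Real.pi) • ξ) from funext (ftE_eq_charFun μ)]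
  fun_prop

theorem tendstoUniformlyOn_ftE {μn : ℕ → Measure (EuclideanSpace ℝ (Fin s))}
    {μ : Measure (EuclideanSpace ℝ (Fin s))} [∀ n, IsProbabilityMeasure (μn n)]
    [IsProbabilityMeasure μ] (hw : WeakConvE μn μ) {K : Set (EuclideanSpace ℝ (Fin s))}
    (hK : IsCompact K) (hμK : μ Kᶜ = 0) {C : Set (EuclideanSpace ℝ (Fin s))} (hC : IsCompact C) :
    TendstoUniformlyOn (fun n => ftE (μn n)) (ftE μ) atTop C := by
  have h := (tendstoUniformlyOn_charFun_of_tendsto_integral hw hK hμK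
    (hC.image (continuous_const_smul (2 * Real.pi)))).comp ((2 * Real.pi) • ·)
  simp_rw [funext (ftE_eq_charFun _)]
  exact h.mono (subset_preimage_image _ _)

theorem exists_ftE_ne_zero_of_ZE_eq_empty {μ : Measure (EuclideanSpace ℝ (Fin s))}
    (hZ : ZE μ = ∅) (ξ : EuclideanSpace ℝ (Fin s)) : ∃ m, ftE μ (ξ + intVec m) ≠ 0 := by
  set ξ₀ : EuclideanSpace ℝ (Fin s) := WithLp.toLp 2 fun i => Int.fract (ξ i)
  have hξ₀ : ξ₀ ∉ ZE μ := hZ ▸ notMem_empty ξ₀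
  simp only [ZE, mem_ofPred_eq, not_and, not_forall] at hξ₀
  obtain ⟨k, hk⟩ := hξ₀ fun i => ⟨Int.fract_nonneg _, Int.fract_lt_one _⟩
  refine ⟨fun i => k i - ⌊ξ i⌋, ?_⟩
  convert hk using 2
  ext i
  simp only [ξ₀, intVec, PiLp.add_apply, Int.cast_sub, Int.fract]
  ring

theorem isCompact_cubeIcc : IsCompact (cubeIcc s) := by
  have : cubeIcc s = EuclideanSpace.equiv (Fin s) ℝ ⁻¹' Icc 0 1 := by
    ext x
    simp [cubeIcc, Pi.le_def, forall_and]
  exact this ▸ (EuclideanSpace.equiv (Fin s) ℝ).toHomeomorph.isCompact_preimage.2 isCompact_Icc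

end EuclideanSpace

theorem statement6_general
    (s : ℕ) (μn : ℕ → Measure (EuclideanSpace ℝ (Fin s)))
    (μ : Measure (EuclideanSpace ℝ (Fin s)))
    [IsProbabilityMeasure μ] (hn : ∀ n, IsProbabilityMeasure (μn n))
    (hμc : ∃ K : Set (EuclideanSpace ℝ (Fin s)), IsCompact K ∧ μ Kᶜ = 0)
    (hw : WeakConvE μn μ) (hZ : ZE μ = ∅) :
    ∃ nk : ℕ → ℕ, StrictMono nk ∧ ∃ ε > 0,
      ∀ x ∈ cubeIco s, ∀ k : ℕ, ∃ m : Fin s → ℤ,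
        ε < ‖ftE (μn (nk k)) (x + intVec m)‖ := by
  obtain ⟨K, hK, hμK⟩ := hμc
  obtain ⟨ε, hε, T, hT⟩ := isCompact_cubeIcc.exists_pos_finset_lt
    (F := fun m ξ => ‖ftE μ (ξ + intVec m)‖)
    (fun m => ((continuous_ftE μ).comp (continuous_add_const _)).norm)
    fun ξ _ => (exists_ftE_ne_zero_of_ZE_eq_empty hZ ξ).imp fun _ => norm_pos_iff.2
  have hclose : ∀ m ∈ T, ∀ᶠ n in atTop, ∀ ξ ∈ cubeIcc s,
      dist (ftE μ (ξ + intVec m)) (ftE (μn n) (ξ + intVec m)) < ε / 2 := fun m _ =>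
    Metric.tendstoUniformlyOn_iff.1 (((tendstoUniformlyOn_ftE hw hK hμK
      (isCompact_cubeIcc.image (continuous_add_const (intVec m)))).comp (· + intVec m)).mono
      (subset_preimage_image _ _)) _ (half_pos hε)
  obtain ⟨N, hN⟩ := eventually_atTop.1 ((Finset.eventually_all T).2 hclose)
  refine ⟨(· + N), strictMono_id.add_const N, ε / 2, half_pos hε, fun ξ hξ k => ?_⟩
  have hξ' : ξ ∈ cubeIcc s := fun i => Ico_subset_Icc_self (hξ i)
  obtain ⟨m, hmT, hm⟩ := hT ξ hξ'
  have hdist := hN (k + N) (Nat.le_add_left N k) m hmT ξ hξ'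
  rw [dist_eq_norm] at hdist
  exact ⟨m, by linarith [norm_sub_norm_le (ftE μ (ξ + intVec m)) (ftE (μn (k + N)) (ξ + intVec m))]⟩

/-- Lemma 3.7.  If compactly supported Borel probability measures
`μ_n → μ` weakly on `ℝ^s` and the integral periodic zero set `Z(μ)` is empty, then some
subsequence `{μ_{n_k}}` is an equi-positive family. -/
theorem statement6
    (s : ℕ) (μn : ℕ → Measure (EuclideanSpace ℝ (Fin s)))
    (μ : Measure (EuclideanSpace ℝ (Fin s)))
    [IsProbabilityMeasure μ] (hn : ∀ n, IsProbabilityMeasure (μn n))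
    (hμc : ∃ K : Set (EuclideanSpace ℝ (Fin s)), IsCompact K ∧ μ Kᶜ = 0)
    (hμnc : ∀ n, ∃ K : Set (EuclideanSpace ℝ (Fin s)), IsCompact K ∧ μn n Kᶜ = 0)
    (hw : WeakConvE μn μ) (hZ : ZE μ = ∅) :
    ∃ nk : ℕ → ℕ, StrictMono nk ∧ ∃ ε > 0,
      ∀ x ∈ cubeIco s, ∀ k : ℕ, ∃ m : Fin s → ℤ,
        ε < ‖ftE (μn (nk k)) (x + intVec m)‖ :=
  statement6_general s μn μ hn hμc hw hZ
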